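/- In any (θ₁, θ₂, …, θ_{2m−1})-representation of nK₄ with θ₁ < θ₂ < ⋯ < θ_{2m−1}, at most one of the n copies of K₄ contains an edge of color m, i.e., at most one copy of K₄ contains an edge uv with r_u + r_v ≥ θ_{2m−1}. -/

import Mathlib

open Finset

/-- The disjoint union of `n` copies of the complete graph `K_m`,
on vertex set `Fin n × Fin m`. -/
def copiesK (n m : ℕ) : SimpleGraph (Fin n × Fin m) where
  Adj x y := x.1 = y.1 ∧ x ≠ y
  symm := ⟨fun x y h => ⟨h.1.symm, h.2.symm⟩⟩
  loopless := ⟨fun x h => h.2 rfl⟩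

/-- The complete `n`-partite graph with `m` vertices in each part,
on vertex set `Fin n × Fin m`. -/
def completeMulti (n m : ℕ) : SimpleGraph (Fin n × Fin m) where
  Adj x y := x.1 ≠ y.1
  symm := ⟨fun x y h => h.symm⟩
  loopless := ⟨fun x h => h rfl⟩

/-- `r` together with the strictly increasing thresholds `θ₁ < ⋯ < θ_k` is a
`(θ₁, …, θ_k)`-representation of `G`: for distinct `u v`, `uv` is an edge iff the
number of thresholds not exceeding `r u + r v` is odd. -/
def IsRep {V : Type*} {k : ℕ} (G : SimpleGraph V) (θ : Fin k → ℝ) (r : V → ℝ) : Prop :=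
  StrictMono θ ∧ ∀ u v : V, u ≠ v →
    (G.Adj u v ↔ Odd (Finset.univ.filter (fun i => θ i ≤ r u + r v)).card)

/-- `G` is a `k`-threshold graph. -/
def IsKThreshold {V : Type*} (G : SimpleGraph V) (k : ℕ) : Prop :=
  ∃ (θ : Fin k → ℝ) (r : V → ℝ), IsRep G θ r

/-- The threshold number `Θ(G)`: the least `k` for which `G` is a `k`-threshold graph. -/
noncomputable def thresholdNumber {V : Type*} (G : SimpleGraph V) : ℕ :=
  sInf {k | IsKThreshold G k}

/-- The 1-based color of an edge with rank sum `s`: it equals `i` exactly when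
`s ∈ [θ_{2i-1}, θ_{2i})` (1-based indexing, with `θ_{k+1} = ∞`), i.e. when the number
of thresholds not exceeding `s` equals `2i - 1`. -/
noncomputable def edgeColor {k : ℕ} (θ : Fin k → ℝ) (s : ℝ) : ℕ :=
  ((Finset.univ.filter (fun i => θ i ≤ s)).card + 1) / 2

/-- The 1-based color of a nonedge with rank sum `s`: it equals `i` exactly when
`s ∈ [θ_{2i-2}, θ_{2i-1})` (1-based indexing, with `θ₀ = -∞`), i.e. when the number
of thresholds not exceeding `s` equals `2i - 2`. -/
noncomputable def nonedgeColor {k : ℕ} (θ : Fin k → ℝ) (s : ℝ) : ℕ :=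
  (Finset.univ.filter (fun i => θ i ≤ s)).card / 2 + 1

/-- The multiset of colors on the three edges of the `t`-th triangle of `nK₃`. -/
noncomputable def triColors3 {n k : ℕ} (θ : Fin k → ℝ) (r : Fin n × Fin 3 → ℝ) (t : Fin n) :
    Multiset ℕ :=
  {edgeColor θ (r (t, 0) + r (t, 1)), edgeColor θ (r (t, 0) + r (t, 2)),
    edgeColor θ (r (t, 1) + r (t, 2))}

/-- The multiset of colors on the three nonedges of the `t`-th part of `K_{n×3}`. -/
noncomputable def partColors3 {n k : ℕ} (θ : Fin k → ℝ) (r : Fin n × Fin 3 → ℝ) (t : Fin n) :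
    Multiset ℕ :=
  {nonedgeColor θ (r (t, 0) + r (t, 1)), nonedgeColor θ (r (t, 0) + r (t, 2)),
    nonedgeColor θ (r (t, 1) + r (t, 2))}

/-!
With an odd number of thresholds, a pair whose rank sum reaches the top threshold is an edge,
so pairs from different copies of `K₄` have rank sums below `θ_{2m-1}`. If edges `ab` of copy
`t₁` and `cd` of copy `t₂` both reach `θ_{2m-1}`, regrouping
`(r_a + r_b) + (r_c + r_d) = (r_a + r_c) + (r_b + r_d)` makes one of the cross pairs `ac`, `bd`
reach it too.
-/

theorem le_add_or_le_add_of_le_add_of_le_add {α : Type*} [AddCommMonoid α] [LinearOrder α]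
    [IsOrderedCancelAddMonoid α] {c a₁ a₂ b₁ b₂ : α} (ha : c ≤ a₁ + a₂) (hb : c ≤ b₁ + b₂) :
    c ≤ a₁ + b₁ ∨ c ≤ a₂ + b₂ := by
  by_contra! h
  have hsum : a₁ + a₂ + (b₁ + b₂) < c + c := by
    rw [add_add_add_comm]
    exact add_lt_add h.1 h.2
  exact (add_le_add ha hb).not_gt hsum

theorem copiesK_not_adj_of_fst_ne {n m : ℕ} {x y : Fin n × Fin m} (h : x.1 ≠ y.1) :
    ¬ (copiesK n m).Adj x y :=
  fun hadj => h hadj.1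

namespace IsRep

variable {V : Type*} {k : ℕ} {G : SimpleGraph V} {θ : Fin k → ℝ} {r : V → ℝ}

theorem adj_of_forall_le (hrep : IsRep G θ r) (hk : Odd k) {u v : V} (huv : u ≠ v)
    (h : ∀ i, θ i ≤ r u + r v) : G.Adj u v := by
  have hall : univ.filter (fun i => θ i ≤ r u + r v) = univ := filter_true_of_mem fun i _ => h i
  rw [hrep.2 u v huv, hall, card_univ, Fintype.card_fin]
  exact hk

theorem lt_of_not_adj (hrep : IsRep G θ r) (hk : Odd k) {L : Fin k} (hL : ∀ i, i ≤ L)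
    {u v : V} (huv : u ≠ v) (hnadj : ¬ G.Adj u v) : r u + r v < θ L := by
  by_contra! hle
  exact hnadj (hrep.adj_of_forall_le hk huv fun i => (hrep.1.monotone (hL i)).trans hle)

end IsRep

/-- In any `(θ₁, …, θ_{2m-1})`-representation of `nK₄`, at most one copy of `K₄`
contains an edge `uv` with `r_u + r_v ≥ θ_{2m-1}` (i.e. of color `m`). -/
theorem stmt18 (n m : ℕ) (hm : 1 ≤ m) (θ : Fin (2 * m - 1) → ℝ)
    (r : Fin n × Fin 4 → ℝ) (hrep : IsRep (copiesK n 4) θ r)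
    (t₁ t₂ : Fin n)
    (h₁ : ∃ a b : Fin 4, a ≠ b ∧ θ ⟨2 * m - 2, by omega⟩ ≤ r (t₁, a) + r (t₁, b))
    (h₂ : ∃ a b : Fin 4, a ≠ b ∧ θ ⟨2 * m - 2, by omega⟩ ≤ r (t₂, a) + r (t₂, b)) :
    t₁ = t₂ := by
  by_contra hne
  obtain ⟨a, b, -, hab⟩ := h₁
  obtain ⟨c, d, -, hcd⟩ := h₂
  have hodd : Odd (2 * m - 1) := ⟨m - 1, by omega⟩
  have htop : ∀ i : Fin (2 * m - 1), i ≤ ⟨2 * m - 2, by omega⟩ := fun i =>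
    Fin.le_def.2 (by have := i.isLt; dsimp only; omega)
  have hcross : ∀ x y : Fin 4, r (t₁, x) + r (t₂, y) < θ ⟨2 * m - 2, by omega⟩ := fun x y =>
    hrep.lt_of_not_adj hodd htop (fun h => hne (congrArg Prod.fst h))
      (copiesK_not_adj_of_fst_ne hne)
  rcases le_add_or_le_add_of_le_add_of_le_add hab hcd with h | h
  · exact (hcross a c).not_ge h
  · exact (hcross b d).not_ge h
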